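/- (Adjacent-pair domination, final step in the proof of Theorem 1) The minimum of the pairwise large deviations rates over all ordered pairs of types equals the minimum over adjacent pairs: min_{0 ≤ i < j ≤ M−1} inf_{a ∈ ℝ} { g(θ_j) I(a|θ_j) + g(θ_i) I(a|θ_i) } = min_{0 ≤ i ≤ M−2} inf_{a ∈ ℝ} { g(θ_{i+1}) I(a|θ_{i+1}) + g(θ_i) I(a|θ_i) }, with all infima taken in [0,∞]. -/

import Mathlib

open MeasureTheory ProbabilityTheory Filter Finset
open scoped ENNReal

/-- Log moment generating function of a single score for a seller of type `θ`:
`Λ(z|θ) = log Σ_{y ∈ Y} ρ(θ,y) exp(z φ(y))`. -/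
noncomputable def lmgf {Y Θ : Type} [Fintype Y] (ρ : Θ → Y → ℝ) (φ : Y → ℝ)
    (θ : Θ) (z : ℝ) : ℝ :=
  Real.log (∑ y, ρ θ y * Real.exp (z * φ y))

/-- Legendre transform `I(a|θ) = sup_z (z a − Λ(z|θ))`, valued in `[0,∞]`. -/
noncomputable def rateI {Y Θ : Type} [Fintype Y] (ρ : Θ → Y → ℝ) (φ : Y → ℝ)
    (θ : Θ) (a : ℝ) : ℝ≥0∞ :=
  ⨆ z : ℝ, ENNReal.ofReal (z * a - lmgf ρ φ θ z)

/-- Pairwise large deviations rate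
`inf_{a ∈ ℝ} { g(θ1) I(a|θ1) + g(θ2) I(a|θ2) }`, valued in `[0,∞]`. -/
noncomputable def pairRate {Y Θ : Type} [Fintype Y] (ρ : Θ → Y → ℝ) (φ : Y → ℝ)
    (g : Θ → ℝ) (θ1 θ2 : Θ) : ℝ≥0∞ :=
  ⨅ a : ℝ, ENNReal.ofReal (g θ1) * rateI ρ φ θ1 a + ENNReal.ofReal (g θ2) * rateI ρ φ θ2 a

/-- Number of matches up to time `k`: `n_k(θ) = ⌊k g(θ)⌋`. -/
noncomputable def nMatch {Θ : Type} (g : Θ → ℝ) (k : ℕ) (θ : Θ) : ℕ := ⌊(k : ℝ) * g θ⌋₊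

/-- Aggregate score at time `k`:
`x_k(θ) = (1/n_k(θ)) Σ_{ℓ=1}^{n_k(θ)} φ(y_ℓ(θ))`. -/
noncomputable def aggScore {Y Θ Ω : Type} (φ : Y → ℝ) (g : Θ → ℝ)
    (ysamp : Θ → ℕ → Ω → Y) (k : ℕ) (θ : Θ) (ω : Ω) : ℝ :=
  (∑ ℓ ∈ Finset.Icc 1 (nMatch g k θ), φ (ysamp θ ℓ ω)) / (nMatch g k θ : ℝ)

/-- `P_k(θ1,θ2) = P(x_k(θ1) > x_k(θ2)) − P(x_k(θ1) < x_k(θ2))`. -/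
noncomputable def Pk {Y Θ Ω : Type} [MeasurableSpace Ω] (μ : Measure Ω)
    (φ : Y → ℝ) (g : Θ → ℝ) (ysamp : Θ → ℕ → Ω → Y) (k : ℕ) (θ1 θ2 : Θ) : ℝ :=
  (μ {ω | aggScore φ g ysamp k θ2 ω < aggScore φ g ysamp k θ1 ω}).toReal -
    (μ {ω | aggScore φ g ysamp k θ1 ω < aggScore φ g ysamp k θ2 ω}).toReal

/-!
Higher types first-order stochastically dominate lower ones, so the mean score `m(θ)` is
nondecreasing in `θ` and, for `z ≤ 0`, `Λ(z|θ)` is nonincreasing in `θ`; hence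
`I(a|θ) ≤ I(a|θ')` whenever `θ ≤ θ'` and `a ≤ m(θ)`. Now let `θ_i ≤ θ_k ≤ θ_j` and fix `a`.
If `a ≤ m(θ_k)`, the `θ_j`-term of the pair `(θ_j, θ_i)` dominates the `θ_k`-term of the pair
`(θ_k, θ_i)`. Otherwise replace `a` by `m(θ_k)`: this kills the `θ_k`-term, and does not
increase `I(·|θ_i)`, which is nondecreasing to the right of `m(θ_i) ≤ m(θ_k)`. So the rate of
`(θ_j, θ_i)` is at least that of `(θ_{i+1}, θ_i)`.
-/

section Dominance

variable {α : Type*} [LinearOrder α]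

theorem Finset.sum_mul_le_sum_mul_of_upperSum_le (s : Finset α) {p q f : α → ℝ}
    (hf : MonotoneOn f s) (hf0 : ∀ x ∈ s, 0 ≤ f x)
    (hpq : ∀ x ∈ s, ∑ y ∈ s with x ≤ y, p y ≤ ∑ y ∈ s with x ≤ y, q y) :
    ∑ x ∈ s, p x * f x ≤ ∑ x ∈ s, q x * f x := by
  classical
  induction s using Finset.induction_on_min generalizing f with
  | empty => simp
  | insert a s ha ih =>
    have has : a ∉ s := fun h => lt_irrefl a (ha a h)
    have hupper : ∀ x ∈ s, ∑ y ∈ insert a s with x ≤ y, p y ≤ ∑ y ∈ insert a s with x ≤ y, q y →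
        ∑ y ∈ s with x ≤ y, p y ≤ ∑ y ∈ s with x ≤ y, q y := by
      intro x hx h
      rwa [filter_insert, if_neg (ha x hx).not_ge] at h
    have htotal : ∑ y ∈ insert a s, p y ≤ ∑ y ∈ insert a s, q y := by
      have h := hpq a (mem_insert_self a s)
      rwa [filter_true_of_mem fun y hy => (mem_insert.1 hy).elim ge_of_eq fun hy => (ha y hy).le]
        at h
    have hshift := ih (f := fun x => f x - f a)
      (fun x hx y hy hxy =>
        sub_le_sub_right (hf (mem_insert_of_mem hx) (mem_insert_of_mem hy) hxy) _)
      (fun x hx => sub_nonneg.2 (hf (mem_insert_self a s) (mem_insert_of_mem hx) (ha x hx).le))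
      (fun x hx => hupper x hx (hpq x (mem_insert_of_mem hx)))
    have hsplit : ∀ r : α → ℝ, ∑ x ∈ insert a s, r x * f x
        = f a * ∑ x ∈ insert a s, r x + ∑ x ∈ s, r x * (f x - f a) := by
      intro r
      simp only [sum_insert has, mul_sub, sum_sub_distrib, mul_add, mul_sum]
      ring_nf
    rw [hsplit p, hsplit q]
    exact add_le_add (mul_le_mul_of_nonneg_left htotal (hf0 a (mem_insert_self a s))) hshift

variable [Fintype α]

theorem Fintype.sum_mul_le_sum_mul_of_upperSum_le {p q f : α → ℝ} (hf : Monotone f)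
    (htotal : ∑ x, p x = ∑ x, q x)
    (hpq : ∀ x, ¬ IsMin x → ∑ y ∈ univ.filter (fun y => x ≤ y), p y
      ≤ ∑ y ∈ univ.filter (fun y => x ≤ y), q y) :
    ∑ x, p x * f x ≤ ∑ x, q x * f x := by
  cases isEmpty_or_nonempty α
  · simp
  obtain ⟨x₀, hx₀⟩ := Finite.exists_min f
  have hshift := univ.sum_mul_le_sum_mul_of_upperSum_le (p := p) (q := q)
    (f := fun x => f x - f x₀)
    (fun x _ y _ hxy => sub_le_sub_right (hf hxy) _) (fun x _ => sub_nonneg.2 (hx₀ x))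
    (fun x _ => by
      by_cases hx : IsMin x
      · rw [filter_true_of_mem fun y _ => (le_total x y).elim id (hx ·)]
        exact htotal.le
      · exact hpq x hx)
  have hsplit : ∀ r : α → ℝ, ∑ x, r x * f x = f x₀ * ∑ x, r x + ∑ x, r x * (f x - f x₀) := by
    intro r
    simp only [mul_sub, sum_sub_distrib, mul_sum]
    ring_nf
  rw [hsplit p, hsplit q, htotal]
  exact add_le_add_right hshift _

end Dominance

section Rate

variable {Y Θ : Type} [Fintype Y]

noncomputable def meanScore (ρ : Θ → Y → ℝ) (φ : Y → ℝ) (θ : Θ) : ℝ := ∑ y, ρ θ y * φ y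

variable {ρ : Θ → Y → ℝ} (φ : Y → ℝ) {θ : Θ}

theorem exp_mul_meanScore_le (hρ0 : ∀ y, 0 ≤ ρ θ y) (hρ1 : ∑ y, ρ θ y = 1) (z : ℝ) :
    Real.exp (z * meanScore ρ φ θ) ≤ ∑ y, ρ θ y * Real.exp (z * φ y) := by
  have := convexOn_exp.map_sum_le (t := univ) (w := ρ θ) (p := fun y => z * φ y)
    (fun y _ => hρ0 y) hρ1 (fun _ _ => Set.mem_univ _)
  simpa only [meanScore, smul_eq_mul, mul_sum, mul_left_comm] using this

theorem mul_meanScore_le_lmgf (hρ0 : ∀ y, 0 ≤ ρ θ y) (hρ1 : ∑ y, ρ θ y = 1) (z : ℝ) :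
    z * meanScore ρ φ θ ≤ lmgf ρ φ θ z := by
  rw [lmgf, ← Real.log_exp (z * _)]
  exact Real.log_le_log (Real.exp_pos _) (exp_mul_meanScore_le φ hρ0 hρ1 z)

theorem ofReal_mul_sub_lmgf_eq_zero (hρ0 : ∀ y, 0 ≤ ρ θ y) (hρ1 : ∑ y, ρ θ y = 1) {z a : ℝ}
    (hza : z * a ≤ z * meanScore ρ φ θ) : ENNReal.ofReal (z * a - lmgf ρ φ θ z) = 0 :=
  ENNReal.ofReal_eq_zero.2 (by linarith [mul_meanScore_le_lmgf φ hρ0 hρ1 z])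

theorem rateI_meanScore (hρ0 : ∀ y, 0 ≤ ρ θ y) (hρ1 : ∑ y, ρ θ y = 1) :
    rateI ρ φ θ (meanScore ρ φ θ) = 0 :=
  ENNReal.iSup_eq_zero.2 fun _ => ofReal_mul_sub_lmgf_eq_zero φ hρ0 hρ1 le_rfl

theorem rateI_monotoneOn (hρ0 : ∀ y, 0 ≤ ρ θ y) (hρ1 : ∑ y, ρ θ y = 1) :
    MonotoneOn (rateI ρ φ θ) (Set.Ici (meanScore ρ φ θ)) := by
  intro a' ha' a _ haa'
  refine iSup_le fun z => ?_
  rcases le_or_gt 0 z with hz | hz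
  · exact le_iSup_of_le z (ENNReal.ofReal_le_ofReal (by nlinarith))
  · rw [ofReal_mul_sub_lmgf_eq_zero φ hρ0 hρ1 (by nlinarith [Set.mem_Ici.1 ha'])]
    exact zero_le

end Rate

section MonotoneInType

variable {Y Θ : Type} [Fintype Y] [LinearOrder Y] [Preorder Θ] {ρ : Θ → Y → ℝ}

noncomputable def upperMass (ρ : Θ → Y → ℝ) (y : Y) (θ : Θ) : ℝ :=
  ∑ y' ∈ univ.filter (fun y' => y ≤ y'), ρ θ y'

theorem monotone_sum_mul (hρ1 : ∀ θ, ∑ y, ρ θ y = 1)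
    (hdom : ∀ y : Y, ¬ IsMin y → Monotone (upperMass ρ y))
    {f : Y → ℝ} (hf : Monotone f) : Monotone (fun θ => ∑ y, ρ θ y * f y) :=
  fun _ _ hij => Fintype.sum_mul_le_sum_mul_of_upperSum_le hf ((hρ1 _).trans (hρ1 _).symm)
    fun y hy => hdom y hy hij

theorem antitone_sum_mul (hρ1 : ∀ θ, ∑ y, ρ θ y = 1)
    (hdom : ∀ y : Y, ¬ IsMin y → Monotone (upperMass ρ y))
    {f : Y → ℝ} (hf : Antitone f) : Antitone (fun θ => ∑ y, ρ θ y * f y) := by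
  intro i j hij
  have := monotone_sum_mul hρ1 hdom hf.neg hij
  simpa only [Pi.neg_apply, mul_neg, sum_neg_distrib, neg_le_neg_iff] using this

variable {φ : Y → ℝ}

theorem lmgf_antitone_of_nonpos (hρ0 : ∀ θ y, 0 ≤ ρ θ y) (hρ1 : ∀ θ, ∑ y, ρ θ y = 1)
    (hdom : ∀ y : Y, ¬ IsMin y → Monotone (upperMass ρ y))
    (hφ : Monotone φ) {z : ℝ} (hz : z ≤ 0) : Antitone (fun θ => lmgf ρ φ θ z) := by
  intro i j hij
  refine Real.log_le_log ((Real.exp_pos _).trans_le (exp_mul_meanScore_le φ (hρ0 j) (hρ1 j) z)) ?_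
  exact antitone_sum_mul hρ1 hdom
    (fun a b hab => Real.exp_le_exp.2 (mul_le_mul_of_nonpos_left (hφ hab) hz)) hij

theorem rateI_le_rateI_of_le_meanScore (hρ0 : ∀ θ y, 0 ≤ ρ θ y) (hρ1 : ∀ θ, ∑ y, ρ θ y = 1)
    (hdom : ∀ y : Y, ¬ IsMin y → Monotone (upperMass ρ y))
    (hφ : Monotone φ) {i j : Θ} (hij : i ≤ j) {a : ℝ} (ha : a ≤ meanScore ρ φ i) :
    rateI ρ φ i a ≤ rateI ρ φ j a := by
  refine iSup_le fun z => ?_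
  rcases le_or_gt z 0 with hz | hz
  · refine le_iSup_of_le z (ENNReal.ofReal_le_ofReal ?_)
    linarith [lmgf_antitone_of_nonpos hρ0 hρ1 hdom hφ hz hij]
  · rw [ofReal_mul_sub_lmgf_eq_zero φ (hρ0 i) (hρ1 i) (mul_le_mul_of_nonneg_left ha hz.le)]
    exact zero_le

theorem pairRate_le_pairRate_of_le (hρ0 : ∀ θ y, 0 ≤ ρ θ y) (hρ1 : ∀ θ, ∑ y, ρ θ y = 1)
    (hdom : ∀ y : Y, ¬ IsMin y → Monotone (upperMass ρ y))
    (hφ : Monotone φ) {g : Θ → ℝ} (hg : Monotone g) {i k j : Θ} (hik : i ≤ k) (hkj : k ≤ j) :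
    pairRate ρ φ g k i ≤ pairRate ρ φ g j i := by
  refine le_iInf fun a => ?_
  rcases le_or_gt a (meanScore ρ φ k) with ha | ha
  · refine (iInf_le _ a).trans (add_le_add_left (mul_le_mul' ?_ ?_) _)
    · exact ENNReal.ofReal_le_ofReal (hg hkj)
    · exact rateI_le_rateI_of_le_meanScore hρ0 hρ1 hdom hφ hkj ha
  · have hmean : meanScore ρ φ i ≤ meanScore ρ φ k := monotone_sum_mul hρ1 hdom hφ hik
    refine (iInf_le _ (meanScore ρ φ k)).trans ?_
    rw [rateI_meanScore φ (hρ0 k) (hρ1 k), mul_zero, zero_add]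
    calc ENNReal.ofReal (g i) * rateI ρ φ i (meanScore ρ φ k)
        ≤ ENNReal.ofReal (g i) * rateI ρ φ i a := by
          gcongr
          exact rateI_monotoneOn φ (hρ0 i) (hρ1 i) hmean (hmean.trans ha.le) ha.le
      _ ≤ _ := le_add_self

end MonotoneInType

theorem adjacent_pair_domination_general
    {Y : Type} [Fintype Y] [Nonempty Y] [LinearOrder Y]
    {M : ℕ}
    (ρ : Fin M → Y → ℝ) (φ : Y → ℝ) (g : Fin M → ℝ)
    -- ρ(θ,·) is a probability mass function on Y
    (hρ0 : ∀ θ y, 0 ≤ ρ θ y) (hρ1 : ∀ θ, ∑ y, ρ θ y = 1)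
    -- the upper cumulative mass function R(·,y) is strictly increasing in θ for
    -- every non-minimal y
    (hR : ∀ y : Y, ¬ IsMin y →
      StrictMono (fun θ => ∑ y' ∈ Finset.univ.filter (fun y' => y ≤ y'), ρ θ y'))
    -- φ is a strictly increasing score function with values in [0,1]
    (hφ : StrictMono φ)
    -- g is a positive nondecreasing match function
    (hgmono : Monotone g) :
    (⨅ (i : Fin M) (j : Fin M) (_ : i < j), pairRate ρ φ g j i) =
      ⨅ (i : ℕ) (h : i + 1 < M),
        pairRate ρ φ g ⟨i + 1, h⟩ ⟨i, Nat.lt_of_succ_lt h⟩ := by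
  refine le_antisymm (le_iInf₂ fun i h => ?_) (le_iInf₂ fun i j => le_iInf fun hij => ?_)
  · exact iInf₂_le_of_le ⟨i, _⟩ ⟨i + 1, h⟩ (iInf_le_of_le (Nat.lt_succ_self i) le_rfl)
  · have hsucc : (i : ℕ) + 1 < M := Nat.lt_of_le_of_lt hij j.isLt
    calc _ ≤ pairRate ρ φ g ⟨i + 1, hsucc⟩ i := iInf₂_le_of_le (i : ℕ) hsucc le_rfl
      _ ≤ pairRate ρ φ g j i :=
        pairRate_le_pairRate_of_le hρ0 hρ1 (fun y hy => (hR y hy).monotone) hφ.monotone hgmono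
          (Nat.le_succ i) hij

/-- **Adjacent-pair domination** (final step in the proof of Theorem 1). The
minimum of the pairwise large deviations rates over all ordered pairs of types
equals the minimum over adjacent pairs:
`min_{0 ≤ i < j ≤ M−1} inf_a { g(θ_j) I(a|θ_j) + g(θ_i) I(a|θ_i) }
  = min_{0 ≤ i ≤ M−2} inf_a { g(θ_{i+1}) I(a|θ_{i+1}) + g(θ_i) I(a|θ_i) }`,
with all infima taken in `[0,∞]`. -/
theorem adjacent_pair_domination
    {Y : Type} [Fintype Y] [Nonempty Y] [LinearOrder Y]
    {M : ℕ} (hM : 2 ≤ M)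
    (ρ : Fin M → Y → ℝ) (φ : Y → ℝ) (g : Fin M → ℝ)
    -- ρ(θ,·) is a probability mass function on Y
    (hρ0 : ∀ θ y, 0 ≤ ρ θ y) (hρ1 : ∀ θ, ∑ y, ρ θ y = 1)
    -- the upper cumulative mass function R(·,y) is strictly increasing in θ for
    -- every non-minimal y
    (hR : ∀ y : Y, ¬ IsMin y →
      StrictMono (fun θ => ∑ y' ∈ Finset.univ.filter (fun y' => y ≤ y'), ρ θ y'))
    -- φ is a strictly increasing score function with values in [0,1]
    (hφ : StrictMono φ) (hφ01 : ∀ y, φ y ∈ Set.Icc (0 : ℝ) 1)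
    -- g is a positive nondecreasing match function
    (hg : ∀ θ, 0 < g θ) (hgmono : Monotone g) :
    (⨅ (i : Fin M) (j : Fin M) (_ : i < j), pairRate ρ φ g j i) =
      ⨅ (i : ℕ) (h : i + 1 < M),
        pairRate ρ φ g ⟨i + 1, h⟩ ⟨i, Nat.lt_of_succ_lt h⟩ :=
  adjacent_pair_domination_general ρ φ g hρ0 hρ1 hR hφ hgmono
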